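/- Let G be a finite abelian group, Γ ⊆ Ĝ a nonempty set of characters, and ν, ν': Γ → (0,2] width functions with ν'(γ) ≤ ν(γ) for all γ ∈ Γ. Then |Bohr(Γ, ν')| ≥ (∏_{γ∈Γ} ν'(γ)/(4ν(γ)))·|Bohr(Γ, ν)|. -/

import Mathlib

open scoped Classical

/-- The Bohr set `Bohr(Γ, ν) = {x ∈ G : |γ(x) − 1| ≤ ν(γ) for all γ ∈ Γ}`. -/
noncomputable def bohrSet {G : Type*} [AddCommGroup G] [Fintype G]
    (Γ : Finset (AddChar G ℂ)) (ν : AddChar G ℂ → ℝ) : Finset G :=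
  Finset.univ.filter fun x => ∀ γ ∈ Γ, ‖γ x - 1‖ ≤ ν γ

/-!
Cut the unit circle into arcs of angular length `ν' γ` for each `γ ∈ Γ`, and sort the points
of `Bohr(Γ, ν)` by the arc containing each `γ x`. Two points `x, y` of the same product cell
have `‖γ (x - y) - 1‖ = ‖γ x - γ y‖ ≤ ν' γ` (chord ≤ arc), so each cell injects into
`Bohr(Γ, ν')` by `x ↦ x - y`. Since arc ≤ `π / 2` · chord, `|arg (γ x)| ≤ π ν γ / 2` on
`Bohr(Γ, ν)`, which meets at most `⌊π ν γ / ν' γ⌋ + 1 ≤ 4 ν γ / ν' γ` arcs.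
-/

open Finset Real

theorem Finset.card_le_card_mul_card_of_sub_mem {G ι : Type*} [AddGroup G]
    {s T : Finset G} {t : Finset ι} (c : G → ι) (hc : ∀ x ∈ s, c x ∈ t)
    (hT : ∀ x ∈ s, ∀ y ∈ s, c x = c y → x - y ∈ T) : #s ≤ #t * #T := by
  rw [card_eq_sum_card_fiberwise hc, ← smul_eq_mul]
  refine sum_le_card_nsmul _ _ _ fun i _ => ?_
  obtain hempty | ⟨y, hy⟩ := (s.filter (c · = i)).eq_empty_or_nonempty
  · simp [hempty]
  rw [mem_filter] at hy
  refine card_le_card_of_injOn (· - y) (fun x hx => ?_) fun x _ x' _ h => sub_left_injective h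
  rw [coe_filter, Set.mem_ofPred_eq] at hx
  exact hT x hx.1 y hy.1 (hx.2.trans hy.2.symm)

theorem Int.floor_pi_mul_add_one_le {r : ℝ} (hr : 1 ≤ r) : (⌊π * r⌋ : ℝ) + 1 ≤ 4 * r := by
  rcases lt_or_ge (π * r) 4 with hsmall | hlarge
  · have hfloor : ⌊π * r⌋ ≤ 3 := Int.lt_add_one_iff.1 (Int.floor_lt.2 (by push_cast; linarith))
    have : (⌊π * r⌋ : ℝ) ≤ 3 := by exact_mod_cast hfloor
    linarith
  · -- `r ≥ 4 / π` and `π < 3.15` give `(4 - π) r ≥ 1`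
    nlinarith [Int.floor_le (π * r), pi_lt_d2, pi_pos]

namespace Complex

theorem abs_arg_le_pi_div_two_mul_norm_sub_one {z : ℂ} (hz : ‖z‖ = 1) :
    |arg z| ≤ π / 2 * ‖z - 1‖ := by
  rw [← angle_one_right (norm_ne_zero_iff.1 (hz ▸ one_ne_zero))]
  exact angle_le_mul_norm_sub hz norm_one

theorem norm_sub_le_abs_arg_sub {z w : ℂ} (hz : ‖z‖ = 1) (hw : ‖w‖ = 1) :
    ‖z - w‖ ≤ |arg z - arg w| := by
  have hexp {u : ℂ} (hu : ‖u‖ = 1) : exp (arg u * I) = u := by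
    simpa [hu] using norm_mul_exp_arg_mul_I u
  have hquot : z / w = exp (I * (arg z - arg w : ℝ)) := by
    rw [ofReal_sub, mul_sub, exp_sub, mul_comm I, mul_comm I, hexp hz, hexp hw]
  calc ‖z - w‖ = ‖z / w - 1‖ := by
        rw [div_sub_one (norm_ne_zero_iff.1 (hw ▸ one_ne_zero)), norm_div, hw, div_one]
    _ ≤ |arg z - arg w| := hquot ▸ norm_exp_I_mul_ofReal_sub_one_le

theorem exists_cells_of_norm_sub_one_le {ν ν' : ℝ} (hν' : 0 < ν') (hle : ν' ≤ ν) :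
    ∃ (c : ℂ → ℤ) (t : Finset ℤ), (#t : ℝ) ≤ 4 * ν / ν' ∧
      (∀ z, ‖z‖ = 1 → ‖z - 1‖ ≤ ν → c z ∈ t) ∧
      ∀ z w, ‖z‖ = 1 → ‖w‖ = 1 → c z = c w → ‖z - w‖ ≤ ν' := by
  refine ⟨fun z => ⌊(arg z + π / 2 * ν) / ν'⌋, Icc 0 ⌊π * (ν / ν')⌋, ?card, ?mem, ?diam⟩
  case card =>
    have hr : 1 ≤ ν / ν' := (one_le_div hν').2 hle
    have hfloor : 0 ≤ ⌊π * (ν / ν')⌋ := Int.floor_nonneg.2 (by positivity)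
    rw [Int.card_Icc, sub_zero, ← Int.cast_natCast, Int.toNat_of_nonneg (by omega)]
    push_cast
    rw [mul_div_assoc]
    exact Int.floor_pi_mul_add_one_le hr
  case mem =>
    intro z hz hzν
    have harg := abs_le.1 ((abs_arg_le_pi_div_two_mul_norm_sub_one hz).trans
      (mul_le_mul_of_nonneg_left hzν (by positivity)))
    rw [mem_Icc]
    constructor
    · exact Int.floor_nonneg.2 (div_nonneg (by linarith) hν'.le)
    · apply Int.floor_le_floor
      rw [← mul_div_assoc]
      gcongr
      linarith
  case diam =>
    intro z w hz hw hzw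
    have hclose := Int.abs_sub_lt_one_of_floor_eq_floor hzw
    rw [← sub_div, abs_div, abs_of_pos hν', div_lt_one hν', add_sub_add_right_eq_sub] at hclose
    exact (norm_sub_le_abs_arg_sub hz hw).trans hclose.le

end Complex

theorem AddChar.norm_apply_sub_sub_one {G R : Type*} [AddCommGroup G] [Finite G] [NormedField R]
    (γ : AddChar G R) (x y : G) : ‖γ (x - y) - 1‖ = ‖γ x - γ y‖ := by
  have hy : γ y ≠ 0 := norm_ne_zero_iff.1 (γ.norm_apply y ▸ one_ne_zero)
  rw [γ.map_sub_eq_div, div_sub_one hy, norm_div, γ.norm_apply, div_one]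

theorem card_bohrSet_le_prod_mul_card_bohrSet {G : Type*} [AddCommGroup G] [Fintype G]
    (Γ : Finset (AddChar G ℂ)) (ν ν' : AddChar G ℂ → ℝ) (hν' : ∀ γ ∈ Γ, 0 < ν' γ)
    (hle : ∀ γ ∈ Γ, ν' γ ≤ ν γ) :
    (#(bohrSet Γ ν) : ℝ) ≤ (∏ γ ∈ Γ, 4 * ν γ / ν' γ) * #(bohrSet Γ ν') := by
  choose c t ht_card hc_mem hc_diam using
    fun γ : Γ => Complex.exists_cells_of_norm_sub_one_le (hν' γ γ.2) (hle γ γ.2)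
  have hcount : #(bohrSet Γ ν) ≤ #(Fintype.piFinset t) * #(bohrSet Γ ν') := by
    refine card_le_card_mul_card_of_sub_mem (fun x γ => c γ (γ.1 x)) (fun x hx => ?_) ?_
    · rw [bohrSet, mem_filter] at hx
      exact Fintype.mem_piFinset.2 fun γ => hc_mem γ _ (γ.1.norm_apply x) (hx.2 γ γ.2)
    · intro x _ y _ hxy
      simp only [bohrSet, mem_filter, mem_univ, true_and]
      intro γ hγ
      rw [AddChar.norm_apply_sub_sub_one]
      exact hc_diam ⟨γ, hγ⟩ _ _ (γ.norm_apply x) (γ.norm_apply y) (congrFun hxy ⟨γ, hγ⟩)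
  have hcells : (#(Fintype.piFinset t) : ℝ) ≤ ∏ γ ∈ Γ, 4 * ν γ / ν' γ := by
    rw [Fintype.card_piFinset, Nat.cast_prod, ← prod_coe_sort Γ]
    exact prod_le_prod (fun _ _ => Nat.cast_nonneg _) fun γ _ => ht_card γ
  calc (#(bohrSet Γ ν) : ℝ) ≤ #(Fintype.piFinset t) * #(bohrSet Γ ν') := by exact_mod_cast hcount
    _ ≤ _ := by gcongr

theorem bohr_size_lower_bound_general {G : Type*} [AddCommGroup G] [Fintype G]
    (Γ : Finset (AddChar G ℂ)) (ν ν' : AddChar G ℂ → ℝ)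
    (hν' : ∀ γ ∈ Γ, 0 < ν' γ ∧ ν' γ ≤ 2)
    (hle : ∀ γ ∈ Γ, ν' γ ≤ ν γ) :
    (∏ γ ∈ Γ, ν' γ / (4 * ν γ)) * ((bohrSet Γ ν).card : ℝ) ≤
      ((bohrSet Γ ν').card : ℝ) := by
  have hpos : ∀ γ ∈ Γ, 0 < ν' γ := fun γ hγ => (hν' γ hγ).1
  have hinv : ∏ γ ∈ Γ, ν' γ / (4 * ν γ) = (∏ γ ∈ Γ, 4 * ν γ / ν' γ)⁻¹ := by
    rw [← prod_inv_distrib]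
    exact prod_congr rfl fun γ _ => (inv_div _ _).symm
  have hprod_pos : 0 < ∏ γ ∈ Γ, 4 * ν γ / ν' γ :=
    prod_pos fun γ hγ => div_pos (by linarith [hpos γ hγ, hle γ hγ]) (hpos γ hγ)
  rw [hinv, inv_mul_le_iff₀ hprod_pos]
  exact card_bohrSet_le_prod_mul_card_bohrSet Γ ν ν' hpos hle

/-- Lower bound for the size of a Bohr set of smaller width:
`|Bohr(Γ,ν')| ≥ (∏_{γ∈Γ} ν'(γ)/(4ν(γ))) · |Bohr(Γ,ν)|`. -/
theorem bohr_size_lower_bound {G : Type*} [AddCommGroup G] [Fintype G]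
    (Γ : Finset (AddChar G ℂ)) (hΓ : Γ.Nonempty) (ν ν' : AddChar G ℂ → ℝ)
    (hν : ∀ γ ∈ Γ, 0 < ν γ ∧ ν γ ≤ 2) (hν' : ∀ γ ∈ Γ, 0 < ν' γ ∧ ν' γ ≤ 2)
    (hle : ∀ γ ∈ Γ, ν' γ ≤ ν γ) :
    (∏ γ ∈ Γ, ν' γ / (4 * ν γ)) * ((bohrSet Γ ν).card : ℝ) ≤
      ((bohrSet Γ ν').card : ℝ) :=
  bohr_size_lower_bound_general Γ ν ν' hν' hle
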